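/- Let G₁ = G₁⁽¹⁾ × ⋯ × G₁⁽ⁿ⁾ ⊆ ℂⁿ with each G₁⁽ʲ⁾ ⊆ ℂ nonempty, bounded and open, and let G₂ ⊆ ℂⁿ be open. Let A : ((Fin n → ℂ) → ℂ) →ₗ[ℂ] ((Fin n → ℂ) → ℂ) be a ℂ-linear map such that: (i) for every f holomorphic on G₁, A f is holomorphic on G₂; and (ii) for every compact set K ⊆ G₂ there exist a compact set L ⊆ G₁ and C > 0 such that ‖A f‖_K ≤ C ‖f‖_L for every f holomorphic on G₁. Then for every compact set K ⊆ G₂, every δ > 0 and every ε > 0 there exists R > 0 such that sup_{z ∈ K} |A(w ↦ ∏_{j=1}^n (w_j − ζ_j)⁻¹)(z)| ≤ ε whenever ζ ∈ ℂⁿ satisfies dist(ζ_j, G₁⁽ʲ⁾) ≥ δ for every j and ‖ζ‖ ≥ R. -/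

import Mathlib

/-!
The kernel `k_ζ(w) = ∏ⱼ (wⱼ - ζⱼ)⁻¹` is holomorphic on `G₁`, so the operator bound gives
`‖A k_ζ‖_K ≤ C ‖k_ζ‖_L` for a compact `L ⊆ G₁`. On `L` every factor is at most `δ⁻¹`, and the
factor at a coordinate with `|ζⱼ| = ‖ζ‖` is at most `(‖ζ‖ - sup_L ‖w‖)⁻¹`, which tends to `0`.
-/

open Set

noncomputable def cauchyKernel {ι : Type*} [Fintype ι] (ζ w : ι → ℂ) : ℂ := ∏ j, (w j - ζ j)⁻¹

section CauchyKernel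

variable {ι : Type*} [Fintype ι] {ζ w : ι → ℂ}

theorem differentiableOn_cauchyKernel {s : Set (ι → ℂ)} (h : ∀ w ∈ s, ∀ j, w j ≠ ζ j) :
    DifferentiableOn ℂ (cauchyKernel ζ) s := by
  intro w hw
  unfold cauchyKernel
  fun_prop (disch := exact sub_ne_zero.mpr (h w hw _))

theorem norm_cauchyKernel_le {δ M : ℝ} (hδ : 0 < δ) (hw : ‖w‖ ≤ M) (hM : M < ‖ζ‖)
    (hdist : ∀ j, δ ≤ ‖w j - ζ j‖) :
    ‖cauchyKernel ζ w‖ ≤ (‖ζ‖ - M)⁻¹ * δ⁻¹ ^ (Fintype.card ι - 1) := by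
  classical
  have : Nonempty ι := by
    by_contra hι
    rw [not_nonempty_iff] at hι
    simp [Subsingleton.elim ζ 0] at hM
    linarith [norm_nonneg w]
  obtain ⟨j₀, hj₀⟩ := (IsGreatest.pi_norm ζ).1
  have hfar : ‖w j₀ - ζ j₀‖⁻¹ ≤ (‖ζ‖ - M)⁻¹ := by
    refine inv_anti₀ (sub_pos.mpr hM) ?_
    calc ‖ζ‖ - M ≤ ‖ζ j₀‖ - ‖w j₀‖ := by linarith [norm_le_pi_norm w j₀]
      _ ≤ ‖w j₀ - ζ j₀‖ := by rw [norm_sub_rev]; exact norm_sub_norm_le _ _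
  have hnear : ∏ j ∈ Finset.univ.erase j₀, ‖w j - ζ j‖⁻¹ ≤ δ⁻¹ ^ (Fintype.card ι - 1) := by
    rw [← Finset.card_univ, ← Finset.card_erase_of_mem (Finset.mem_univ j₀), ← Finset.prod_const]
    exact Finset.prod_le_prod (fun j _ => by positivity) fun j _ => inv_anti₀ hδ (hdist j)
  rw [cauchyKernel, norm_prod, ← Finset.mul_prod_erase _ _ (Finset.mem_univ j₀)]
  simp only [norm_inv]
  gcongr

end CauchyKernel

theorem le_norm_sub_of_le_infDist {s : Set ℂ} {x y : ℂ} {δ : ℝ} (hx : x ∈ s)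
    (h : δ ≤ Metric.infDist y s) : δ ≤ ‖x - y‖ := by
  rw [← dist_eq_norm, dist_comm]
  exact h.trans (Metric.infDist_le_dist_of_mem hx)

theorem IsCompact.norm_le_biSup_norm {X E : Type*} [TopologicalSpace X] [SeminormedAddCommGroup E]
    {K : Set X} {g : X → E} (hK : IsCompact K) (hg : ContinuousOn g K) {z : X} (hz : z ∈ K) :
    ‖g z‖ ≤ ⨆ x ∈ K, ‖g x‖ := by
  refine le_ciSup₂ (f := fun x (_ : x ∈ K) => ‖g x‖) ((hK.bddAbove_image hg.norm).mono ?_) z hz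
  rintro _ ⟨_, ⟨x, rfl⟩, ⟨hx, rfl⟩⟩
  exact ⟨x, hx, rfl⟩

theorem stmt_17_general (n : ℕ) (G1 : Fin n → Set ℂ)
    (G2 : Set (Fin n → ℂ))
    (A : ((Fin n → ℂ) → ℂ) →ₗ[ℂ] ((Fin n → ℂ) → ℂ))
    (hA1 : ∀ f : (Fin n → ℂ) → ℂ,
      DifferentiableOn ℂ f (Set.univ.pi G1) → DifferentiableOn ℂ (A f) G2)
    (hA2 : ∀ K : Set (Fin n → ℂ), IsCompact K → K ⊆ G2 →
      ∃ (L : Set (Fin n → ℂ)) (C : ℝ), IsCompact L ∧ L ⊆ Set.univ.pi G1 ∧ 0 < C ∧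
        ∀ f : (Fin n → ℂ) → ℂ, DifferentiableOn ℂ f (Set.univ.pi G1) →
          (⨆ z ∈ K, ‖A f z‖) ≤ C * ⨆ z ∈ L, ‖f z‖) :
    ∀ K : Set (Fin n → ℂ), IsCompact K → K ⊆ G2 →
      ∀ δ > (0 : ℝ), ∀ ε > (0 : ℝ), ∃ R > (0 : ℝ), ∀ ζ : Fin n → ℂ,
        (∀ j, δ ≤ Metric.infDist (ζ j) (G1 j)) → R ≤ ‖ζ‖ →
        ∀ z ∈ K, ‖A (fun w => ∏ j, (w j - ζ j)⁻¹) z‖ ≤ ε := by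
  intro K hK hKG2 δ hδ ε hε
  obtain ⟨L, C, hL, hLG1, hC, hAL⟩ := hA2 K hK hKG2
  obtain ⟨M, hM, hLM⟩ := hL.isBounded.exists_pos_norm_le
  set B := δ⁻¹ ^ (Fintype.card (Fin n) - 1)
  refine ⟨M + C * B / ε, by positivity, fun ζ hζG1 hζR z hz => ?_⟩
  have hdist : ∀ w ∈ univ.pi G1, ∀ j, δ ≤ ‖w j - ζ j‖ := fun w hw j =>
    le_norm_sub_of_le_infDist (hw j (mem_univ j)) (hζG1 j)
  have hf : DifferentiableOn ℂ (cauchyKernel ζ) (univ.pi G1) :=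
    differentiableOn_cauchyKernel fun w hw j hwj => by
      linarith [hdist w hw j, show ‖w j - ζ j‖ = 0 by simp [hwj]]
  have hζM : C * B / ε ≤ ‖ζ‖ - M := by linarith
  have hζM_pos : 0 < ‖ζ‖ - M := lt_of_lt_of_le (by positivity) hζM
  have hsupL : ⨆ w ∈ L, ‖cauchyKernel ζ w‖ ≤ (‖ζ‖ - M)⁻¹ * B :=
    Real.iSup_le (fun w => Real.iSup_le (fun hw =>
      norm_cauchyKernel_le hδ (hLM w hw) (by linarith) (hdist w (hLG1 hw))) (by positivity))
      (by positivity)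
  calc ‖A (cauchyKernel ζ) z‖ ≤ ⨆ x ∈ K, ‖A (cauchyKernel ζ) x‖ :=
        hK.norm_le_biSup_norm ((hA1 _ hf).continuousOn.mono hKG2) hz
    _ ≤ C * ⨆ w ∈ L, ‖cauchyKernel ζ w‖ := hAL _ hf
    _ ≤ C * ((‖ζ‖ - M)⁻¹ * B) := by gcongr
    _ = C * B / (‖ζ‖ - M) := by ring
    _ ≤ ε := by rwa [div_le_iff₀ hζM_pos, mul_comm ε, ← div_le_iff₀ hε]

/-- Decay at infinity of the operator kernel: for a bounded operator `A`
from `H(G₁)` (`G₁ = G₁⁽¹⁾ × ⋯ × G₁⁽ⁿ⁾` a product of nonempty bounded open planar sets)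
to `H(G₂)`, the kernel `ζ ↦ A(w ↦ ∏ⱼ (wⱼ - ζⱼ)⁻¹)` tends to `0` uniformly on compact
subsets of `G₂` as `|ζ| → ∞` within the region where every coordinate stays at distance
at least `δ` from the corresponding factor `G₁⁽ʲ⁾`. -/
theorem stmt_17 (n : ℕ) (G1 : Fin n → Set ℂ)
    (hne : ∀ j, (G1 j).Nonempty) (hbd : ∀ j, Bornology.IsBounded (G1 j))
    (hop : ∀ j, IsOpen (G1 j))
    (G2 : Set (Fin n → ℂ)) (hG2 : IsOpen G2)
    (A : ((Fin n → ℂ) → ℂ) →ₗ[ℂ] ((Fin n → ℂ) → ℂ))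
    (hA1 : ∀ f : (Fin n → ℂ) → ℂ,
      DifferentiableOn ℂ f (Set.univ.pi G1) → DifferentiableOn ℂ (A f) G2)
    (hA2 : ∀ K : Set (Fin n → ℂ), IsCompact K → K ⊆ G2 →
      ∃ (L : Set (Fin n → ℂ)) (C : ℝ), IsCompact L ∧ L ⊆ Set.univ.pi G1 ∧ 0 < C ∧
        ∀ f : (Fin n → ℂ) → ℂ, DifferentiableOn ℂ f (Set.univ.pi G1) →
          (⨆ z ∈ K, ‖A f z‖) ≤ C * ⨆ z ∈ L, ‖f z‖) :
    ∀ K : Set (Fin n → ℂ), IsCompact K → K ⊆ G2 →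
      ∀ δ > (0 : ℝ), ∀ ε > (0 : ℝ), ∃ R > (0 : ℝ), ∀ ζ : Fin n → ℂ,
        (∀ j, δ ≤ Metric.infDist (ζ j) (G1 j)) → R ≤ ‖ζ‖ →
        ∀ z ∈ K, ‖A (fun w => ∏ j, (w j - ζ j)⁻¹) z‖ ≤ ε :=
  stmt_17_general n G1 G2 A hA1 hA2
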